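/- arXiv:2406.14339 — 6 statements merged into one kernel-verified Lean document; each statement's English description precedes it below -/
import Mathlib

section
/- Let F be a field of characteristic 2 and let x, y, a, b ∈ F with b ≠ 0 and x² + b·y² ≠ 0. Then there exists c ∈ F such that the quadratic 2-fold Pfister form ⟨⟨x² + b·y², a]] is isometric to ⟨⟨b, c]]. -/
open scoped TensorProduct

universe u

noncomputable section

/-- The binary quadratic form `[a,b] : aX² + XY + bY²`. -/
def binQF (R : Type u) [CommRing R] (a b : R) : QuadraticForm R (R × R) :=
  LinearMap.BilinMap.toQuadraticMap <| LinearMap.mk₂ R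
    (fun x y => a * x.1 * y.1 + x.1 * y.2 + b * x.2 * y.2)
    (by intros; simp; ring) (by intros; simp; ring)
    (by intros; simp; ring) (by intros; simp; ring)

/-- The quadratic form associated to an `n × n` coefficient matrix:
`Q(x) = ∑ p q, c p q * x p * x q`. Every finite-dimensional quadratic form over a field
arises this way after a choice of basis. -/
def coeffQF (R : Type u) [CommRing R] {n : ℕ} (c : Fin n → Fin n → R) :
    QuadraticForm R (Fin n → R) :=
  LinearMap.BilinMap.toQuadraticMap <| LinearMap.mk₂ R
    (fun x y => ∑ p, ∑ q, c p q * x p * y q)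
    (by intros; simp [add_mul, mul_add, Finset.sum_add_distrib])
    (by intros; simp [Finset.mul_sum]; congr 1; ext p; congr 1; ext q; ring)
    (by intros; simp [mul_add, Finset.sum_add_distrib])
    (by intros; simp [Finset.mul_sum]; congr 1; ext p; congr 1; ext q; ring)

/-- The quadratic 2-fold Pfister form `⟨⟨u,v]] = [1,v] ⊥ u·[1,v]`. -/
def pf2 (R : Type u) [CommRing R] (u v : R) : QuadraticForm R ((R × R) × (R × R)) :=
  (binQF R 1 v).prod (u • binQF R 1 v)

/-- The orthogonal sum of `k` hyperbolic planes `[0,0]`. -/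
def hyps (R : Type u) [CommRing R] (k : ℕ) : QuadraticForm R (Fin k → R × R) :=
  QuadraticMap.pi fun _ => binQF R 0 0

/-- Witt equivalence of quadratic forms: the forms become isometric after adding
hyperbolic planes. -/
def WittEq (R : Type u) [CommRing R] {V W : Type u} [AddCommGroup V] [Module R V]
    [AddCommGroup W] [Module R W] (Q₁ : QuadraticForm R V) (Q₂ : QuadraticForm R W) : Prop :=
  ∃ k l : ℕ, (Q₁.prod (hyps R k)).Equivalent (Q₂.prod (hyps R l))

/-- The `F`-algebra `A` is split, i.e. isomorphic to a matrix algebra over `F`. -/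
def IsSplitAlg (F A : Type u) [Field F] [Ring A] [Algebra F A] : Prop :=
  ∃ n : ℕ, 0 < n ∧ Nonempty (A ≃ₐ[F] Matrix (Fin n) (Fin n) F)

/-- Brauer equivalence of `F`-algebras. -/
def BrEq (F A B : Type u) [Field F] [Ring A] [Algebra F A] [Ring B] [Algebra F B] : Prop :=
  ∃ n m : ℕ, 0 < n ∧ 0 < m ∧
    Nonempty (Matrix (Fin n) (Fin n) A ≃ₐ[F] Matrix (Fin m) (Fin m) B)

/-- `A` is the quaternion `F`-algebra `[a,b)_F` (characteristic 2 presentation):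
`A` is `4`-dimensional, generated by `i, j` with `i² + i = a`, `j² = b`, `ji = (1+i)j`. -/
def IsQuatAlg (F A : Type u) [Field F] [Ring A] [Algebra F A] (a b : F) : Prop :=
  Module.finrank F A = 4 ∧ ∃ i j : A,
    i * i + i = algebraMap F A a ∧ j * j = algebraMap F A b ∧ j * i = (1 + i) * j ∧
    Algebra.adjoin F {i, j} = ⊤

/-- `A` is Brauer equivalent to a tensor product of exactly `m` quaternion `F`-algebras. -/
def TensorRepLen (F : Type u) [Field F] (A : Type u) [Ring A] [Algebra F A] (m : ℕ) : Prop :=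
  ∃ Q : Fin m → AlgCat.{u} F, (∀ k, ∃ a b : F, IsQuatAlg F (Q k) a b) ∧
    BrEq F A (⨂[F] k, (Q k))

/-- The 2-symbol length of `A` is at most `m`. -/
def SymLenLe (F : Type u) [Field F] (A : Type u) [Ring A] [Algebra F A] (m : ℕ) : Prop :=
  ∃ j ≤ m, TensorRepLen F A j

/-- The Scharlau transfer of a quadratic form along an `F`-linear functional `s : K → F`. -/
def transferQF {F K V : Type u} [Field F] [Field K] [Algebra F K]
    [AddCommGroup V] [Module K V] [Module F V] [IsScalarTower F K V]
    (s : K →ₗ[F] F) (φ : QuadraticForm K V) : QuadraticForm F V where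
  toFun v := s (φ v)
  toFun_smul a v := by
    show s (φ (a • v)) = (a * a) • s (φ v)
    rw [show a • v = (algebraMap F K a) • v from algebra_compatible_smul K a v,
      QuadraticMap.map_smul, smul_eq_mul, ← map_mul, ← Algebra.smul_def,
      map_smul, smul_eq_mul]
  exists_companion' := by
    obtain ⟨B, hB⟩ := φ.exists_companion
    refine ⟨LinearMap.mk₂ F (fun u v => s (B u v)) (fun x y z => by simp)
      (fun c x y => by
        show s (B (c • x) y) = c • s (B x y)
        rw [show c • x = (algebraMap F K c) • x from algebra_compatible_smul K c x,
          map_smul, LinearMap.smul_apply, smul_eq_mul, ← Algebra.smul_def, map_smul,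
          smul_eq_mul])
      (fun x y z => by simp)
      (fun c x y => by
        show s (B x (c • y)) = c • s (B x y)
        rw [show c • y = (algebraMap F K c) • y from algebra_compatible_smul K c y,
          map_smul, smul_eq_mul, ← Algebra.smul_def, map_smul, smul_eq_mul]),
      fun x y => by simp [hB]⟩

end

/-! In the quaternion algebra `[a, u)` (`i² + i = a`, `j² = u`, `ji = (1 + i)j`), whose norm form
is `⟨⟨u, a]]`, the elements `J = x + j` and `I = i + (x / u) ij` satisfy `J² = x² + u`,
`JI = (1 + I)J` and `I² + I = a (x² + u) / u` in characteristic 2. Writing the norm form in the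
basis `1, I, J, IJ` gives `⟨⟨u, a]] ≅ ⟨⟨x² + u, a (x² + u) / u]]`. For `u = x² + b y²` the new
slot is `b y²`, and the square `y²` can be dropped. If `y = 0`, then `u = x²` and both
`⟨⟨x², a]]` and `⟨⟨b, 0]]` are hyperbolic. -/

section Pfister

variable {F : Type u} [Field F]

lemma pf2_apply (u v : F) (z : (F × F) × (F × F)) :
    pf2 F u v z = (z.1.1 ^ 2 + z.1.1 * z.1.2 + v * z.1.2 ^ 2)
      + u * (z.2.1 ^ 2 + z.2.1 * z.2.2 + v * z.2.2 ^ 2) := by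
  simp [pf2, binQF, LinearMap.BilinMap.toQuadraticMap_apply]
  ring

lemma hyps_two_apply (z : Fin 2 → F × F) :
    hyps F 2 z = (z 0).1 * (z 0).2 + (z 1).1 * (z 1).2 := by
  simp [hyps, binQF, LinearMap.BilinMap.toQuadraticMap_apply, Fin.sum_univ_two]

lemma pf2_mul_sq_equivalent (u a : F) {w : F} (hw : w ≠ 0) :
    (pf2 F (u * w ^ 2) a).Equivalent (pf2 F u a) :=
  ⟨{ LinearEquiv.prodCongr (LinearEquiv.refl F (F × F)) (LinearEquiv.smulOfNeZero F _ w hw) with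
    map_app' := fun z => by
      simp only [LinearEquiv.toFun_eq_coe, LinearEquiv.prodCongr_apply, LinearEquiv.refl_apply,
        LinearEquiv.smulOfNeZero_apply, pf2_apply, Prod.smul_fst, Prod.smul_snd, smul_eq_mul]
      ring }⟩

lemma pf2_zero_equivalent_hyps {b : F} (hb : b ≠ 0) : (pf2 F b 0).Equivalent (hyps F 2) :=
  ⟨{ toFun z := ![(z.1.1, z.1.1 + z.1.2), (b * z.2.1, z.2.1 + z.2.2)]
     invFun v := (((v 0).1, (v 0).2 - (v 0).1), ((v 1).1 / b, (v 1).2 - (v 1).1 / b))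
     map_add' z w := by ext i <;> fin_cases i <;> simp <;> ring
     map_smul' c z := by ext i <;> fin_cases i <;> simp <;> ring
     left_inv z := by ext <;> simp [hb]
     right_inv v := by ext i <;> fin_cases i <;> simp [mul_div_cancel₀ _ hb]
     map_app' z := by simp only [hyps_two_apply, pf2_apply]; simp; ring }⟩

variable [CharP F 2]

lemma pf2_one_equivalent_hyps (a : F) : (pf2 F 1 a).Equivalent (hyps F 2) :=
  ⟨{ toFun z := ![(z.1.1 + z.2.1, z.1.1 + z.2.1 + z.1.2 + z.2.2 + z.2.2),
       (z.1.2 + z.2.2, a * (z.1.2 + z.2.2) + z.2.1)]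
     invFun v := (((v 0).1 - ((v 1).2 - a * (v 1).1), (v 1).1 - ((v 0).2 - (v 0).1 - (v 1).1)),
       ((v 1).2 - a * (v 1).1, (v 0).2 - (v 0).1 - (v 1).1))
     map_add' z w := by ext i <;> fin_cases i <;> simp <;> ring
     map_smul' c z := by ext i <;> fin_cases i <;> simp <;> ring
     left_inv z := by ext <;> simp <;> ring
     right_inv v := by ext i <;> fin_cases i <;> simp; ring
     map_app' z := by
       simp only [hyps_two_apply, pf2_apply]
       simp
       linear_combination (z.1.1 * z.2.1 + z.1.1 * z.2.2 + z.2.1 * z.1.2 + z.2.1 * z.2.2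
         + a * z.1.2 * z.2.2) * CharTwo.two_eq_zero (R := F) }⟩

lemma pf2_equivalent_pf2_sq_add (x a : F) {u : F} (hu : u ≠ 0) (hv : x ^ 2 + u ≠ 0) :
    (pf2 F u a).Equivalent (pf2 F (x ^ 2 + u) (a * (x ^ 2 + u) / u)) := by
  refine QuadraticMap.Equivalent.symm ⟨{
    toFun z := ((z.1.1 + x * z.2.1, z.1.2), (z.2.1, (x * z.1.2 + (x ^ 2 + u) * z.2.2) / u))
    invFun z := ((z.1.1 - x * z.2.1, z.1.2), (z.2.1, (u * z.2.2 - x * z.1.2) / (x ^ 2 + u)))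
    map_add' z w := by ext <;> simp <;> ring
    map_smul' c z := by ext <;> simp <;> ring
    left_inv z := by ext <;> simp; field_simp; ring
    right_inv z := by ext <;> simp; field_simp; ring
    map_app' z := by
      simp only [pf2_apply]
      field_simp
      linear_combination (u * x * z.2.1 * (z.1.1 + z.1.2) + a * x * (x ^ 2 + u) * z.1.2 * z.2.2)
        * CharTwo.two_eq_zero (R := F) }⟩

end Pfister

/-- If `b ≠ 0` and `x² + by² ≠ 0` in a field `F` of characteristic 2, then
`⟨⟨x² + by², a]] ≅ ⟨⟨b, c]]` for some `c ∈ F`. -/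
theorem stmt_0 (F : Type u) [Field F] [CharP F 2] (x y a b : F) (hb : b ≠ 0)
    (hxy : x ^ 2 + b * y ^ 2 ≠ 0) :
    ∃ c : F, (pf2 F (x ^ 2 + b * y ^ 2) a).Equivalent (pf2 F b c) := by
  by_cases hy : y = 0
  · subst hy
    have hx : x ≠ 0 := by rintro rfl; simp at hxy
    refine ⟨0, ?_⟩
    rw [show x ^ 2 + b * 0 ^ 2 = 1 * x ^ 2 by ring]
    exact (pf2_mul_sq_equivalent 1 a hx).trans
      ((pf2_one_equivalent_hyps a).trans (pf2_zero_equivalent_hyps hb).symm)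
  · have hsum : x ^ 2 + (x ^ 2 + b * y ^ 2) = b * y ^ 2 := by
      linear_combination x ^ 2 * CharTwo.two_eq_zero (R := F)
    have hby : x ^ 2 + (x ^ 2 + b * y ^ 2) ≠ 0 := by
      rw [hsum]; exact mul_ne_zero hb (pow_ne_zero 2 hy)
    refine ⟨a * (b * y ^ 2) / (x ^ 2 + b * y ^ 2), ?_⟩
    have hslot := pf2_equivalent_pf2_sq_add x a hxy hby
    rw [hsum] at hslot
    exact hslot.trans (pf2_mul_sq_equivalent b _ hy)
end

section
/- Let F be a field of characteristic 2, let K/F be a purely inseparable quadratic extension with K² ⊆ F, and let x ∈ K, y ∈ K^×. Then the image of the quaternion algebra [x, y)_K under the Frobenius transfer Frob_{K/F} is Brauer equivalent to [x², y²)_F. -/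
/-!
Base change along `σ : K → F` sends a presentation `i, j` of `[x, y)_K` to `1 ⊗ i, 1 ⊗ j`,
which satisfy `I² + I = σ x`, `J² = σ y`, `JI = (1 + I)J` and, together with `1` and `IJ`,
form the base-changed basis. The multiplication table of `1, i, j, ij` depends only on the
two parameters, so a 4-dimensional algebra generated by such a pair is determined up to
isomorphism: `F ⊗[K] Q ≅ [σ x, σ y)_F`, a fortiori the two are Brauer equivalent.
-/

open scoped TensorProduct

universe u

theorem LinearMap.map_mul_of_basis {R A B ι : Type*} [CommRing R] [Ring A] [Algebra R A]
    [Ring B] [Algebra R B] (b : Module.Basis ι R A) (f : A →ₗ[R] B)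
    (h : ∀ p q, f (b p * b q) = f (b p) * f (b q)) (z w : A) :
    f (z * w) = f z * f w :=
  have hbilin : (LinearMap.mul R A).compr₂ f = (LinearMap.mul R B).compl₁₂ f f :=
    LinearMap.ext_basis b b h
  LinearMap.congr_fun₂ hbilin z w

section QuaternionPresentation

variable {R A : Type*} [CommRing R] [Ring A] [Algebra R A]

structure IsQuatGens (a b : R) (i j : A) : Prop where
  i_mul_i_add_i : i * i + i = algebraMap R A a
  j_mul_j_eq : j * j = algebraMap R A b
  j_mul_i_eq : j * i = (1 + i) * j

def quatFamily (i j : A) : Fin 4 → A := ![1, i, j, i * j]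

@[simp] theorem quatFamily_zero (i j : A) : quatFamily i j 0 = 1 := rfl
@[simp] theorem quatFamily_one (i j : A) : quatFamily i j 1 = i := rfl
@[simp] theorem quatFamily_two (i j : A) : quatFamily i j 2 = j := rfl
@[simp] theorem quatFamily_three (i j : A) : quatFamily i j 3 = i * j := rfl

theorem adjoin_eq_top_of_span_quatFamily {i j : A}
    (hspan : Submodule.span R (Set.range (quatFamily i j)) = ⊤) :
    Algebra.adjoin R {i, j} = ⊤ := by
  have hi : i ∈ Algebra.adjoin R {i, j} := Algebra.subset_adjoin (Set.mem_insert i {j})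
  have hj : j ∈ Algebra.adjoin R {i, j} := Algebra.subset_adjoin (Set.mem_insert_of_mem i rfl)
  have hle : Submodule.span R (Set.range (quatFamily i j)) ≤
      Subalgebra.toSubmodule (Algebra.adjoin R {i, j}) := by
    rw [Submodule.span_le]
    rintro _ ⟨k, rfl⟩
    fin_cases k
    exacts [Subalgebra.one_mem _, hi, hj, Subalgebra.mul_mem _ hi hj]
  rwa [hspan, top_le_iff, Algebra.toSubmodule_eq_top] at hle

namespace IsQuatGens

variable {a b : R} {i j : A} (h : IsQuatGens a b i j)
include h

theorem i_mul_i : i * i = a • (1 : A) - i := by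
  rw [eq_sub_iff_add_eq, h.i_mul_i_add_i, Algebra.algebraMap_eq_smul_one]

theorem j_mul_j : j * j = b • (1 : A) := by
  rw [h.j_mul_j_eq, Algebra.algebraMap_eq_smul_one]

theorem j_mul_i : j * i = j + i * j := by
  rw [h.j_mul_i_eq, add_mul, one_mul]

theorem i_mul_ij : i * (i * j) = a • j - i * j := by
  rw [← mul_assoc, h.i_mul_i, sub_mul, smul_mul_assoc, one_mul]

theorem j_mul_ij : j * (i * j) = b • (1 : A) + b • i := by
  rw [← mul_assoc, h.j_mul_i, add_mul, h.j_mul_j, mul_assoc, h.j_mul_j, mul_smul_comm,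
    mul_one]

theorem ij_mul_i : i * j * i = a • j := by
  rw [mul_assoc, h.j_mul_i, mul_add, h.i_mul_ij]
  module

theorem ij_mul_j : i * j * j = b • i := by
  rw [mul_assoc, h.j_mul_j, mul_smul_comm, mul_one]

theorem ij_mul_ij : i * j * (i * j) = (a * b) • (1 : A) := by
  rw [mul_assoc, h.j_mul_ij, mul_add, mul_smul_comm, mul_one, mul_smul_comm, h.i_mul_i]
  module

theorem quatFamily_mul_mem_span (p q : Fin 4) :
    quatFamily i j p * quatFamily i j q ∈ Submodule.span R (Set.range (quatFamily i j)) := by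
  set S := Submodule.span R (Set.range (quatFamily i j))
  have mem (k : Fin 4) : quatFamily i j k ∈ S := Submodule.subset_span ⟨k, rfl⟩
  have m1 : (1 : A) ∈ S := mem 0
  have mi : i ∈ S := mem 1
  have mj : j ∈ S := mem 2
  have mij : i * j ∈ S := mem 3
  fin_cases p <;> fin_cases q <;>
    simp only [Fin.zero_eta, Fin.mk_one, Fin.reduceFinMk, quatFamily_zero, quatFamily_one,
      quatFamily_two, quatFamily_three, one_mul, mul_one, h.i_mul_i, h.j_mul_j, h.j_mul_i,
      h.i_mul_ij, h.j_mul_ij, h.ij_mul_i, h.ij_mul_j, h.ij_mul_ij] <;>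
    repeat' first | assumption | apply add_mem | apply sub_mem | apply Submodule.smul_mem

theorem span_quatFamily_eq_top (hadj : Algebra.adjoin R {i, j} = ⊤) :
    Submodule.span R (Set.range (quatFamily i j)) = ⊤ := by
  set S := Submodule.span R (Set.range (quatFamily i j))
  have mem (k : Fin 4) : quatFamily i j k ∈ S := Submodule.subset_span ⟨k, rfl⟩
  have hmul (z w : A) (hz : z ∈ S) (hw : w ∈ S) : z * w ∈ S := by
    have hSS : S * S ≤ S := by
      rw [Submodule.span_mul_span, Submodule.span_le]
      rintro _ ⟨_, ⟨p, rfl⟩, _, ⟨q, rfl⟩, rfl⟩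
      exact h.quatFamily_mul_mem_span p q
    exact hSS (Submodule.mul_mem_mul hz hw)
  have htop : (⊤ : Subalgebra R A) ≤ S.toSubalgebra (mem 0) hmul :=
    hadj ▸ Algebra.adjoin_le (Set.pair_subset (mem 1) (mem 2))
  exact eq_top_iff.mpr fun z _ => htop Algebra.mem_top

end IsQuatGens

theorem IsQuatGens.baseChange {K L Q : Type*} [CommRing K] [CommRing L] [Algebra K L]
    [Ring Q] [Algebra K Q] {a b : K} {i j : Q} (h : IsQuatGens a b i j) :
    IsQuatGens (algebraMap K L a) (algebraMap K L b)
      ((1 : L) ⊗ₜ[K] i) ((1 : L) ⊗ₜ[K] j) := by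
  have hmap (z : K) : (1 : L) ⊗ₜ[K] algebraMap K Q z =
      algebraMap L (L ⊗[K] Q) (algebraMap K L z) := by
    rw [← IsScalarTower.algebraMap_apply]
    exact Algebra.TensorProduct.includeRight.commutes z
  refine ⟨?_, ?_, ?_⟩
  · rw [Algebra.TensorProduct.tmul_mul_tmul, one_mul, ← TensorProduct.tmul_add,
      h.i_mul_i_add_i, hmap]
  · rw [Algebra.TensorProduct.tmul_mul_tmul, one_mul, h.j_mul_j_eq, hmap]
  · rw [Algebra.TensorProduct.tmul_mul_tmul, h.j_mul_i_eq, Algebra.TensorProduct.one_def,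
      ← TensorProduct.tmul_add, Algebra.TensorProduct.tmul_mul_tmul]

end QuaternionPresentation

theorem IsQuatGens.nonempty_algEquiv_of_span {F A A' : Type*} [Field F] [Ring A]
    [Algebra F A] [Ring A'] [Algebra F A'] {a b : F} {i j : A} {i' j' : A'}
    (h : IsQuatGens a b i j) (h' : IsQuatGens a b i' j')
    (hspan : Submodule.span F (Set.range (quatFamily i j)) = ⊤)
    (hspan' : Submodule.span F (Set.range (quatFamily i' j')) = ⊤)
    (hrank : Module.finrank F A = 4) (hrank' : Module.finrank F A' = 4) :
    Nonempty (A ≃ₐ[F] A') := by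
  let bA := basisOfTopLeSpanOfCardEqFinrank (quatFamily i j) hspan.ge (by simp [hrank])
  let bA' := basisOfTopLeSpanOfCardEqFinrank (quatFamily i' j') hspan'.ge (by simp [hrank'])
  let f : A ≃ₗ[F] A' := bA.equiv bA' (Equiv.refl _)
  have hf (k : Fin 4) : f (quatFamily i j k) = quatFamily i' j' k := by
    simpa [bA, bA'] using bA.equiv_apply k bA' (Equiv.refl _)
  have hf1 : f 1 = 1 := hf 0
  have hfi : f i = i' := hf 1
  have hfj : f j = j' := hf 2
  have hfij : f (i * j) = i' * j' := hf 3
  have hmul := LinearMap.map_mul_of_basis bA (f : A →ₗ[F] A') fun p q => by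
    simp only [bA, coe_basisOfTopLeSpanOfCardEqFinrank, LinearEquiv.coe_coe]
    fin_cases p <;> fin_cases q <;>
      simp only [Fin.zero_eta, Fin.mk_one, Fin.reduceFinMk, quatFamily_zero, quatFamily_one,
        quatFamily_two, quatFamily_three, one_mul, mul_one, h.i_mul_i, h.j_mul_j, h.j_mul_i,
        h.i_mul_ij, h.j_mul_ij, h.ij_mul_i, h.ij_mul_j, h.ij_mul_ij, h'.i_mul_i, h'.j_mul_j,
        h'.j_mul_i, h'.i_mul_ij, h'.j_mul_ij, h'.ij_mul_i, h'.ij_mul_j, h'.ij_mul_ij, map_add,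
        map_sub, map_smul, hf1, hfi, hfj, hfij]
  exact ⟨AlgEquiv.ofLinearEquiv f hf1 hmul⟩

namespace IsQuatAlg

variable {F A : Type u} [Field F] [Ring A] [Algebra F A] {a b : F}

theorem exists_isQuatGens_span_eq_top (hA : IsQuatAlg F A a b) :
    ∃ i j : A, IsQuatGens a b i j ∧ Submodule.span F (Set.range (quatFamily i j)) = ⊤ := by
  obtain ⟨-, i, j, hi, hj, hc, hadj⟩ := hA
  have h : IsQuatGens a b i j := ⟨hi, hj, hc⟩
  exact ⟨i, j, h, h.span_quatFamily_eq_top hadj⟩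

theorem nonempty_algEquiv {B : Type u} [Ring B] [Algebra F B] (hA : IsQuatAlg F A a b)
    (hB : IsQuatAlg F B a b) : Nonempty (A ≃ₐ[F] B) := by
  obtain ⟨i, j, h, hspan⟩ := hA.exists_isQuatGens_span_eq_top
  obtain ⟨i', j', h', hspan'⟩ := hB.exists_isQuatGens_span_eq_top
  exact h.nonempty_algEquiv_of_span h' hspan hspan' hA.1 hB.1

theorem baseChange {L : Type u} [Field L] [Algebra F L] (hA : IsQuatAlg F A a b) :
    IsQuatAlg L (L ⊗[F] A) (algebraMap F L a) (algebraMap F L b) := by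
  obtain ⟨i, j, h, hspan⟩ := hA.exists_isQuatGens_span_eq_top
  let bA := basisOfTopLeSpanOfCardEqFinrank (quatFamily i j) hspan.ge (by simp [hA.1])
  have hbasis : ⇑(bA.baseChange L) = quatFamily ((1 : L) ⊗ₜ[F] i) ((1 : L) ⊗ₜ[F] j) := by
    funext k
    fin_cases k <;> simp [bA, Algebra.TensorProduct.one_def, Algebra.TensorProduct.tmul_mul_tmul]
  have hL := h.baseChange (L := L)
  refine ⟨by rw [Module.finrank_baseChange, hA.1], _, _, hL.1, hL.2, hL.3,
    adjoin_eq_top_of_span_quatFamily ?_⟩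
  rw [← hbasis]
  exact (bA.baseChange L).span_eq

end IsQuatAlg

theorem BrEq.of_algEquiv {F A B : Type u} [Field F] [Ring A] [Algebra F A] [Ring B]
    [Algebra F B] (e : A ≃ₐ[F] B) : BrEq F A B :=
  ⟨1, 1, one_pos, one_pos, ⟨e.mapMatrix⟩⟩

theorem stmt_2_general (F K Q Q' : Type u) [Field F] [Field K]
    (σ : K →+* F)
    [Ring Q] [Algebra K Q] (x y : K) (hQ : IsQuatAlg K Q x y)
    [Ring Q'] [Algebra F Q'] (hQ' : IsQuatAlg F Q' (σ x) (σ y)) :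
    letI : Algebra K F := σ.toAlgebra
    BrEq F (F ⊗[K] Q) Q' := by
  let _ : Algebra K F := σ.toAlgebra
  obtain ⟨e⟩ := hQ.baseChange.nonempty_algEquiv hQ'
  exact BrEq.of_algEquiv e

/-- For an inseparable quadratic extension `K/F` (char 2, `K² ⊆ F`) with
Frobenius `σ : K → F`, `z ↦ z²`, the Frobenius transfer of `[x,y)_K` (the base change of
`[x,y)_K` along `σ`) is Brauer equivalent to `[x², y²)_F`. -/
theorem stmt_2 (F K Q Q' : Type u) [Field F] [Field K] [Algebra F K] [CharP F 2]
    (hins : ∀ z : K, z ^ 2 ∈ (algebraMap F K).range) (hdeg : Module.finrank F K = 2)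
    (σ : K →+* F) (hσ : ∀ z : K, algebraMap F K (σ z) = z ^ 2)
    [Ring Q] [Algebra K Q] (x y : K) (hy : y ≠ 0) (hQ : IsQuatAlg K Q x y)
    [Ring Q'] [Algebra F Q'] (hQ' : IsQuatAlg F Q' (σ x) (σ y)) :
    letI : Algebra K F := σ.toAlgebra
    BrEq F (F ⊗[K] Q) Q' :=
  stmt_2_general F K Q Q' σ x y hQ hQ'
end

section
/- Let F be a field of characteristic 2, K = F(√b) an inseparable quadratic extension with b ∈ F^× \ F^×², and s : K → F the F-linear functional with s(1) = 0 and s(√b) = 1. For z = x + y√b ∈ K^× with x, y ∈ F and y ≠ 0, the transfer s_*(⟨z⟩_b) of the 1-dimensional bilinear form ⟨z⟩_b is isometric to the binary symmetric bilinear form ⟨y, y(x² + by²)⟩_b over F. -/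
open scoped TensorProduct

universe u

/-! With `w = x + y√b`, characteristic 2 gives `w² = x² + by² ∈ F`, and `y ≠ 0` makes `1, w` an
`F`-basis of `K`. In that basis
`s(w(a₁ + a₂w)(a₁' + a₂'w)) = s(w)·a₁a₁' + s(w)·(x² + by²)·a₂a₂'`, since the cross terms are
multiples of `s(w²) = (x² + by²)·s(1) = 0`; finally `s(w) = y`. -/

section PairMap

variable (F : Type*) {K : Type*} [Field F] [CommRing K] [Algebra F K]

def pairMap (w : K) : F × F →ₗ[F] K :=
  (Algebra.linearMap F K).coprod (LinearMap.toSpanSingleton F K w)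

variable {F}

theorem pairMap_apply (w : K) (a : F × F) :
    pairMap F w a = algebraMap F K a.1 + algebraMap F K a.2 * w := by
  simp [pairMap, Algebra.smul_def]

theorem pairMap_injective [Nontrivial K] {w : K} (hw : w ∉ Set.range (algebraMap F K)) :
    Function.Injective (pairMap F w) := by
  rw [injective_iff_map_eq_zero]
  rintro ⟨a₁, a₂⟩ ha
  rw [pairMap_apply] at ha
  obtain rfl : a₂ = 0 := by
    by_contra ha₂
    have hinv : algebraMap F K a₂⁻¹ * algebraMap F K a₂ = 1 := by
      rw [← map_mul, inv_mul_cancel₀ ha₂, map_one]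
    refine hw ⟨-(a₂⁻¹ * a₁), ?_⟩
    rw [map_neg, map_mul]
    linear_combination (-algebraMap F K a₂⁻¹) * ha + w * hinv
  simpa using ha

theorem pairMap_surjective {β : K}
    (hspan : ∀ k : K, ∃ u v : F, k = algebraMap F K u + algebraMap F K v * β)
    (x : F) {y : F} (hy : y ≠ 0) :
    Function.Surjective (pairMap F (algebraMap F K x + algebraMap F K y * β)) := by
  intro k
  obtain ⟨u, v, rfl⟩ := hspan k
  refine ⟨(u - v * y⁻¹ * x, v * y⁻¹), ?_⟩
  have hv : v * y⁻¹ * y = v := inv_mul_cancel_right₀ hy v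
  calc pairMap F _ (u - v * y⁻¹ * x, v * y⁻¹)
      = algebraMap F K u + algebraMap F K (v * y⁻¹ * y) * β := by
        simp only [pairMap_apply, map_sub, map_mul]
        ring
    _ = algebraMap F K u + algebraMap F K v * β := by rw [hv]

theorem map_mul_pairMap_mul_pairMap (s : K →ₗ[F] F) (hs1 : s 1 = 0) {w : K} {c : F}
    (hw : w * w = algebraMap F K c) (a a' : F × F) :
    s (w * pairMap F w a * pairMap F w a') = s w * a.1 * a'.1 + s w * c * a.2 * a'.2 := by
  have hsc : ∀ t : F, s (algebraMap F K t) = 0 := fun t => by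
    rw [Algebra.algebraMap_eq_smul_one, map_smul, hs1, smul_zero]
  have expand : w * pairMap F w a * pairMap F w a' =
      (a.1 * a'.1) • w + algebraMap F K ((a.1 * a'.2 + a.2 * a'.1) * c)
        + (a.2 * a'.2 * c) • w := by
    simp only [pairMap_apply, Algebra.smul_def, map_add, map_mul]
    linear_combination (algebraMap F K a.1 * algebraMap F K a'.2
      + algebraMap F K a.2 * algebraMap F K a'.1
      + algebraMap F K a.2 * algebraMap F K a'.2 * w) * hw
  rw [expand, map_add, map_add, map_smul, map_smul, hsc, smul_eq_mul, smul_eq_mul]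
  ring

end PairMap

theorem notMem_range_algebraMap_of_sq_eq {F K : Type*} [Field F] [Ring K] [Nontrivial K]
    [Algebra F K] {b : F} (hbns : ∀ u : F, u ^ 2 ≠ b) {β : K}
    (hβ : β ^ 2 = algebraMap F K b) : β ∉ Set.range (algebraMap F K) := by
  rintro ⟨t, rfl⟩
  exact hbns t ((algebraMap F K).injective (by rw [map_pow, hβ]))

theorem algebraMap_add_algebraMap_mul_notMem_range {F K : Type*} [Field F] [Ring K]
    [Algebra F K] {β : K} (hβ : β ∉ Set.range (algebraMap F K)) (x : F) {y : F}
    (hy : y ≠ 0) :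
    algebraMap F K x + algebraMap F K y * β ∉ Set.range (algebraMap F K) := by
  rintro ⟨t, ht⟩
  refine hβ ⟨y⁻¹ * (t - x), ?_⟩
  rw [map_mul, map_sub, ht, add_sub_cancel_left, ← mul_assoc, ← map_mul, inv_mul_cancel₀ hy,
    map_one, one_mul]

/-- For `K = F(√b)` with `s(1) = 0`, `s(√b) = 1`, and `z = x + y√b` with
`y ≠ 0`, the transfer `s_*(⟨z⟩_b)` is isometric to the diagonal bilinear form
`⟨y, y(x² + by²)⟩_b` over `F`. -/
theorem stmt_5 (F K : Type u) [Field F] [Field K] [Algebra F K] [CharP F 2]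
    (b : F) (hbns : ∀ u : F, u ^ 2 ≠ b) (β : K) (hβ : β ^ 2 = algebraMap F K b)
    (hspan : ∀ w : K, ∃ u v : F, w = algebraMap F K u + algebraMap F K v * β)
    (s : K →ₗ[F] F) (hs1 : s 1 = 0) (hsβ : s β = 1)
    (x y : F) (hy : y ≠ 0) :
    ∃ e : K ≃ₗ[F] F × F, ∀ u v : K,
      s ((algebraMap F K x + algebraMap F K y * β) * u * v)
        = y * (e u).1 * (e v).1 + y * (x ^ 2 + b * y ^ 2) * (e u).2 * (e v).2 := by
  have : CharP K 2 := charP_of_injective_algebraMap (algebraMap F K).injective 2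
  set w := algebraMap F K x + algebraMap F K y * β
  have hsw : s w = y := by
    simp [w, Algebra.algebraMap_eq_smul_one, hs1, hsβ]
  have hww : w * w = algebraMap F K (x ^ 2 + b * y ^ 2) := by
    rw [← sq, add_pow_char, mul_pow, hβ]
    simp only [map_add, map_mul, map_pow]
    ring
  have hbij : Function.Bijective (pairMap F w) :=
    ⟨pairMap_injective (algebraMap_add_algebraMap_mul_notMem_range
        (notMem_range_algebraMap_of_sq_eq hbns hβ) x hy),
      pairMap_surjective hspan x hy⟩
  set e := LinearEquiv.ofBijective (pairMap F w) hbij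
  refine ⟨e.symm, fun u v => ?_⟩
  obtain ⟨a, rfl⟩ := e.surjective u
  obtain ⟨a', rfl⟩ := e.surjective v
  have h := map_mul_pairMap_mul_pairMap s hs1 hww a a'
  rw [hsw] at h
  rwa [e.symm_apply_apply, e.symm_apply_apply]
end

section
/- Let F be a field of characteristic 2, D a central division F-algebra of exponent 2 containing an inseparable quadratic extension K/F, and suppose the centralizer C_D(K) contains a separable quadratic extension L/K. Writing L = K(α) with α² − α ∈ K, the field L' = F(α²) is a separable quadratic extension of F and L = K·L'; in particular L/F is a mixed biquadratic inseparable field extension contained in D. -/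
/-!
Write `K = F(β)` and `c = α² − α ∈ K`. In characteristic 2 squaring is additive, so `K² ⊆ F`
and `e := c² ∈ F`; as Frobenius commutes with `x ↦ x² − x`, `γ = α²` satisfies `γ² − γ = e`.
Hence `γ ∉ F` (otherwise `α = γ − c ∈ K`) has the separable minimal polynomial `X² − X − e`,
while `β` has the inseparable one `X² − b`, and `K[α] = K[γ]`. Since `β` and `α` commute,
`F[β, α]` is a subfield of `D`, in which `F ⊂ K ⊂ K(α)` is a tower of two quadratic extensions.
-/

open scoped TensorProduct

universe u

open Polynomial Module IntermediateField
open scoped IsMulCommutative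

section MinimalPolynomial

variable {F D : Type*} [Field F] [Ring D] [Algebra F D]

theorem minpoly_eq_of_natDegree_eq_two [Nontrivial D] {x : D} {p : F[X]} (hm : p.Monic)
    (hd : p.natDegree = 2) (hroot : aeval x p = 0) (hx : x ∉ (algebraMap F D).range) :
    minpoly F x = p :=
  have hint : IsIntegral F x := ⟨p, hm, hroot⟩
  (eq_of_monic_of_dvd_of_natDegree_le (minpoly.monic hint) hm (minpoly.dvd F x hroot)
    (hd ▸ (minpoly.two_le_natDegree_iff hint).2 hx)).symm

theorem minpoly_eq_X_sq_sub_C [Nontrivial D] {x : D} (hx : x ∉ (algebraMap F D).range) {r : F}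
    (hr : x * x = algebraMap F D r) : minpoly F x = X ^ 2 - C r :=
  minpoly_eq_of_natDegree_eq_two (by monicity!) (by compute_degree!) (by simp [sq, hr]) hx

theorem minpoly_eq_X_sq_sub_X_sub_C [Nontrivial D] {x : D} (hx : x ∉ (algebraMap F D).range)
    {r : F} (hr : x * x - x = algebraMap F D r) : minpoly F x = X ^ 2 - X - C r :=
  minpoly_eq_of_natDegree_eq_two (by monicity!) (by compute_degree!) (by simp [sq, hr]) hx

theorem finrank_adjoin_singleton {x : D} (hx : IsIntegral F x) :
    finrank F (Algebra.adjoin F {x}) = (minpoly F x).natDegree := by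
  have := Algebra.isMulCommutative_adjoin F (s := {x}) (by simp)
  let S := Algebra.adjoin F {x}
  let x' : S := ⟨x, Algebra.self_mem_adjoin_singleton F x⟩
  have htop : Algebra.adjoin F {x'} = ⊤ := by
    rw [← Algebra.adjoin_adjoin_coe_preimage (s := {x})]
    congr 1
    ext z
    simp [x', Subtype.ext_iff]
  have hx' : IsIntegral F x' := (isIntegral_algHom_iff S.val Subtype.val_injective).mp hx
  rw [(PowerBasis.ofAdjoinEqTop hx' htop).finrank, PowerBasis.ofAdjoinEqTop_dim,
    ← minpoly.algHom_eq S.val Subtype.val_injective]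
  rfl

end MinimalPolynomial

theorem Polynomial.separable_X_pow_sub_X_sub_C {R : Type*} [CommRing R] (p : ℕ) [CharP R p]
    (a : R) : (X ^ p - X - C a).Separable := by
  refine ⟨1, X ^ p - X - C a - 1, ?_⟩
  rw [derivative_sub, derivative_sub, derivative_X_pow, derivative_X, derivative_C,
    C_eq_natCast, CharP.cast_eq_zero]
  ring

theorem Polynomial.not_separable_X_pow_sub_C {R : Type*} [CommRing R] [IsDomain R] (p : ℕ)
    [Fact p.Prime] [CharP R p] (a : R) : ¬(X ^ p - C a).Separable := by
  rw [separable_def, derivative_sub, derivative_X_pow, derivative_C, C_eq_natCast,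
    CharP.cast_eq_zero, zero_mul, sub_zero, isCoprime_zero_right]
  intro hunit
  have := natDegree_eq_zero_of_isUnit hunit
  rw [natDegree_X_pow_sub_C] at this
  exact (Fact.out : p.Prime).ne_zero this

theorem pow_mem_range_of_mem_adjoin_singleton {F D : Type*} [Field F] [Ring D] [Algebra F D]
    (p : ℕ) [ExpChar F p] {x y : D} (hy : y ^ p ∈ (algebraMap F D).range)
    (hx : x ∈ Algebra.adjoin F {y}) : x ^ p ∈ (algebraMap F D).range := by
  obtain ⟨r, hr⟩ := hy
  rw [Algebra.adjoin_singleton_eq_range_aeval] at hx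
  obtain ⟨f, rfl⟩ := hx
  refine ⟨eval r (f.map (frobenius F p)), ?_⟩
  rw [← aeval_algebraMap_apply_eq_algebraMap_eval, hr, ← expand_aeval, ← map_expand,
    map_frobenius_expand, map_pow]
  rfl

theorem Algebra.adjoin_pair_mul_self_eq {R A : Type*} [CommRing R] [Ring A] [Algebra R A]
    {x y : A} (h : y * y - y ∈ Algebra.adjoin R {x}) :
    Algebra.adjoin R {x, y * y} = Algebra.adjoin R {x, y} := by
  have hK : Algebra.adjoin R {x} ≤ Algebra.adjoin R {x, y * y} := Algebra.adjoin_mono (by simp)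
  refine le_antisymm (Algebra.adjoin_le (Set.pair_subset_iff.2 ⟨?_, ?_⟩))
    (Algebra.adjoin_le (Set.pair_subset_iff.2 ⟨?_, ?_⟩))
  · exact Algebra.subset_adjoin (by simp)
  · exact mul_mem (Algebra.subset_adjoin (by simp)) (Algebra.subset_adjoin (by simp))
  · exact Algebra.subset_adjoin (by simp)
  · simpa using sub_mem (Algebra.subset_adjoin (by simp) : y * y ∈ _) (hK h)

theorem IntermediateField.finrank_adjoin_pair {F E : Type*} [Field F] [Field E] [Algebra F E]
    {x y : E} (hx : IsIntegral F x) (hy : IsIntegral F⟮x⟯ y) :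
    finrank F F⟮x, y⟯ = (minpoly F x).natDegree * (minpoly F⟮x⟯ y).natDegree := by
  rw [← adjoin.finrank hx, ← adjoin.finrank hy, ← adjoin_simple_adjoin_simple,
    Module.finrank_mul_finrank]
  rfl

section DivisionAlgebra

variable {F D : Type*} [Field F] [DivisionRing D] [Algebra F D] [FiniteDimensional F D]

noncomputable abbrev Algebra.adjoinFieldOfComm {s : Set D}
    (hcomm : ∀ a ∈ s, ∀ b ∈ s, a * b = b * a) : Field (Algebra.adjoin F s) :=
  have := Algebra.isMulCommutative_adjoin F hcomm
  (Algebra.IsIntegral.isField_iff_isField (algebraMap F _).injective).mp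
    (Field.toIsField F) |>.toField

theorem finrank_adjoin_pair_of_mul_self_sub_mem {x y : D} (hxy : x * y = y * x)
    (hy : y ∉ Algebra.adjoin F {x}) (hy2 : y * y - y ∈ Algebra.adjoin F {x}) :
    finrank F (Algebra.adjoin F {x, y}) = (minpoly F x).natDegree * 2 := by
  let E := Algebra.adjoin F {x, y}
  let _ : Field E := Algebra.adjoinFieldOfComm <| by
    rintro _ (rfl | rfl) _ (rfl | rfl) <;> first | rfl | exact hxy | exact hxy.symm
  let x' : E := ⟨x, Algebra.subset_adjoin (by simp)⟩
  let y' : E := ⟨y, Algebra.subset_adjoin (by simp)⟩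
  have hmem (z : E) : z ∈ F⟮x'⟯ ↔ (z : D) ∈ Algebra.adjoin F {x} := by
    rw [← mem_toSubalgebra, adjoin_simple_toSubalgebra_of_isAlgebraic
      (IsIntegral.of_finite F x').isAlgebraic, show ({x} : Set D) = E.val '' {x'} by simp [x'],
      Algebra.adjoin_image, Subalgebra.mem_map]
    exact ⟨fun hz => ⟨z, hz, rfl⟩, fun ⟨w, hw, hwz⟩ => Subtype.val_injective hwz ▸ hw⟩
  have htop : F⟮x', y'⟯ = ⊤ := by
    refine adjoin_eq_top_of_algebra F _ ?_
    rw [← Algebra.adjoin_adjoin_coe_preimage (s := {x, y})]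
    congr 1
    ext z
    simp [x', y', Subtype.ext_iff]
  have hy' : minpoly F⟮x'⟯ y' = X ^ 2 - X - C ⟨y' * y' - y', (hmem _).2 hy2⟩ :=
    minpoly_eq_X_sq_sub_X_sub_C (fun ⟨w, hw⟩ => hy ((hmem y').1 (hw ▸ w.2))) rfl
  rw [← finrank_top', ← htop, finrank_adjoin_pair (.of_finite F x') (.of_finite _ y'), hy',
    ← minpoly.algHom_eq E.val Subtype.val_injective]
  congr 1
  compute_degree!

end DivisionAlgebra

theorem stmt_15_general (F D : Type u) [Field F] [CharP F 2] [DivisionRing D] [Algebra F D]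
    [FiniteDimensional F D]
    (b : F) (hbns : ∀ u : F, u ^ 2 ≠ b) (β : D) (hβ : β * β = algebraMap F D b)
    (α : D) (hcomm : α * β = β * α) (hαK : α ∉ Algebra.adjoin F {β})
    (hAS : α * α - α ∈ Algebra.adjoin F {β}) :
    IsSeparable F (α * α) ∧ Module.finrank F ↥(Algebra.adjoin F {α * α}) = 2 ∧
    Algebra.adjoin F {β, α} = Algebra.adjoin F {β, α * α} ∧
    Module.finrank F ↥(Algebra.adjoin F {β, α}) = 4 ∧
    ¬ IsSeparable F β := by
  have : ExpChar D 2 := expChar_of_injective_algebraMap (algebraMap F D).injective 2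
  have hβF : β ∉ (algebraMap F D).range := fun ⟨u, hu⟩ =>
    hbns u <| (algebraMap F D).injective <| by rw [map_pow, hu, sq, hβ]
  have hminβ := minpoly_eq_X_sq_sub_C hβF hβ
  obtain ⟨e, he⟩ := pow_mem_range_of_mem_adjoin_singleton 2 ⟨b, by rw [sq, hβ]⟩ hAS
  have hγ : (α * α) * (α * α) - α * α = algebraMap F D e := by
    rw [he, ← sq, ← sq, sub_pow_expChar_of_commute 2 ((Commute.refl α).pow_left 2), sq]
  have hγF : α * α ∉ (algebraMap F D).range := fun ⟨g, hg⟩ =>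
    hαK <| by simpa [← hg] using sub_mem (Subalgebra.algebraMap_mem _ g) hAS
  have hminγ := minpoly_eq_X_sq_sub_X_sub_C hγF hγ
  refine ⟨?_, ?_, (Algebra.adjoin_pair_mul_self_eq hAS).symm, ?_, ?_⟩
  · rw [IsSeparable, hminγ]
    exact separable_X_pow_sub_X_sub_C 2 e
  · rw [finrank_adjoin_singleton (.of_finite F _), hminγ]
    compute_degree!
  · rw [finrank_adjoin_pair_of_mul_self_sub_mem hcomm.symm hαK hAS, hminβ, natDegree_X_pow_sub_C]
  · rw [IsSeparable, hminβ]
    exact not_separable_X_pow_sub_C 2 b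

/-- Let `D` be a central division `F`-algebra of exponent 2 in
characteristic 2 containing `K = F(√b)`, and let `α ∈ C_D(K)` with `α² − α ∈ K`,
`α ∉ K`. Then `L' = F(α²)` is a separable quadratic extension of `F` and
`L = K(α) = K·L'`; in particular `L/F` is a mixed biquadratic (degree 4, inseparable)
extension contained in `D`. -/
theorem stmt_15 (F D : Type u) [Field F] [CharP F 2] [DivisionRing D] [Algebra F D]
    [Algebra.IsCentral F D] [FiniteDimensional F D]
    (hexp : IsSplitAlg F (D ⊗[F] D))
    (b : F) (hbns : ∀ u : F, u ^ 2 ≠ b) (β : D) (hβ : β * β = algebraMap F D b)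
    (α : D) (hcomm : α * β = β * α) (hαK : α ∉ Algebra.adjoin F {β})
    (hAS : α * α - α ∈ Algebra.adjoin F {β}) :
    IsSeparable F (α * α) ∧ Module.finrank F ↥(Algebra.adjoin F {α * α}) = 2 ∧
    Algebra.adjoin F {β, α} = Algebra.adjoin F {β, α * α} ∧
    Module.finrank F ↥(Algebra.adjoin F {β, α}) = 4 ∧
    ¬ IsSeparable F β :=
  stmt_15_general F D b hbns β hβ α hcomm hαK hAS
end

section
/- Let F be a field of characteristic 2 and K/F a purely inseparable quadratic extension (K² ⊆ F). Then I²_q K = IK ⊗ I_q F; that is, every class in I²_q K is a sum of classes of forms ⟨1, u⟩_b ⊗ φ with u ∈ K^× and φ a nonsingular quadratic form defined over F. -/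
open scoped TensorProduct

universe u

/-!
In characteristic 2 one has `[1, c] ≅ [1, c²]`, and `[1, d] ⊥ [1, d]` is hyperbolic. Hence
`λ⟨⟨u, c]] ⊥ 2H ≅ ⟨1, λ⟩_b ⊗ [1, c²] ⊥ ⟨1, λu⟩_b ⊗ [1, c²]`: this is the Witt-group identity
`λ⟨1, u⟩ = ⟨1, λ⟩ + ⟨1, λu⟩ - ⟨1, 1⟩` tensored with `[1, c²]`, and `c² ∈ F` because `K² ⊆ F`.
-/

namespace QuadraticMap

variable {R S ι κ M N P : Type*} [CommSemiring R] [AddCommMonoid M] [Module R M]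
  [AddCommMonoid N] [Module R N] [AddCommMonoid P] [Module R P]

theorem Equivalent.smul [Monoid S] [DistribMulAction S P] [SMulCommClass S R P]
    {Q₁ : QuadraticMap R M P} {Q₂ : QuadraticMap R N P} (h : Q₁.Equivalent Q₂) (a : S) :
    (a • Q₁).Equivalent (a • Q₂) :=
  h.map fun e => { e.toLinearEquiv with map_app' := fun m => by simp [e.map_app] }

theorem smul_prod [Monoid S] [DistribMulAction S P] [SMulCommClass S R P] (a : S)
    (Q₁ : QuadraticMap R M P) (Q₂ : QuadraticMap R N P) :
    a • Q₁.prod Q₂ = (a • Q₁).prod (a • Q₂) := by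
  ext x
  simp [smul_add]

theorem equivalent_prod_of_unique [Unique N] (Q : QuadraticMap R M P)
    (Q' : QuadraticMap R N P) :
    Q.Equivalent (Q.prod Q') :=
  ⟨{ (LinearEquiv.prodUnique (R := R) (M := M) (M₂ := N)).symm with
    map_app' := fun m => by simp [Subsingleton.elim (default : N) 0] }⟩

theorem equivalent_pi_unique [Unique ι] (Q : QuadraticMap R M P) :
    Q.Equivalent (pi fun _ : ι => Q) :=
  ⟨{ (LinearEquiv.funUnique ι R M).symm with map_app' := fun m => by simp [pi_apply] }⟩

theorem pi_finTwo_equivalent (Q : Fin 2 → QuadraticMap R M P) :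
    (pi Q).Equivalent ((Q 0).prod (Q 1)) :=
  ⟨{ LinearEquiv.finTwoArrow R M with
    map_app' := fun m => by simp [pi_apply, Fin.sum_univ_two] }⟩

variable [Fintype ι] [Fintype κ]

theorem pi_prod_equivalent_prod_pi (Q : ι → QuadraticMap R M P)
    (Q' : ι → QuadraticMap R N P) :
    (pi fun i => (Q i).prod (Q' i)).Equivalent ((pi Q).prod (pi Q')) :=
  ⟨{ toFun := fun f => (fun i => (f i).1, fun i => (f i).2)
     invFun := fun p i => (p.1 i, p.2 i)
     map_add' := fun _ _ => rfl
     map_smul' := fun _ _ => rfl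
     left_inv := fun _ => rfl
     right_inv := fun _ => rfl
     map_app' := fun f => by simp [pi_apply, Finset.sum_add_distrib] }⟩

theorem pi_comp_equivalent (e : ι ≃ κ) (Q : κ → QuadraticMap R M P) :
    (pi fun i => Q (e i)).Equivalent (pi Q) :=
  ⟨{ LinearEquiv.piCongrLeft R (fun _ => M) e with
    map_app' := fun f => by simp [pi_apply, LinearEquiv.piCongrLeft, ← e.sum_comp] }⟩

theorem pi_equivalent_pi_curry (Q : ι × κ → QuadraticMap R M P) :
    (pi Q).Equivalent (pi fun i => pi fun j => Q (i, j)) :=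
  ⟨{ LinearEquiv.curry R M ι κ with
    map_app' := fun f => by simp [pi_apply, Fintype.sum_prod_type] }⟩

end QuadraticMap

open QuadraticMap

section

variable {R M N : Type*} [CommRing R] [AddCommGroup M] [Module R M] [AddCommGroup N]
  [Module R N]

@[simp] theorem binQF_apply (a b : R) (z : R × R) :
    binQF R a b z = a * z.1 * z.1 + z.1 * z.2 + b * z.2 * z.2 := rfl

/-- The form `⟨1, w⟩_b ⊗ Q`. -/
def pfTensor (w : R) (Q : QuadraticForm R M) : QuadraticForm R (M × M) :=
  Q.prod (w • Q)

theorem pfTensor_congr (w : R) {Q : QuadraticForm R M} {Q' : QuadraticForm R N}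
    (h : Q.Equivalent Q') :
    (pfTensor w Q).Equivalent (pfTensor w Q') :=
  h.prod (h.smul w)

theorem smul_pf2 (l u c : R) :
    l • pf2 R u c = (l • binQF R 1 c).prod ((l * u) • binQF R 1 c) := by
  rw [pf2, smul_prod, smul_smul]

theorem hyps_mul_equivalent (n h : ℕ) :
    (hyps R (n * h)).Equivalent (pi fun _ : Fin n => hyps R h) :=
  (pi_comp_equivalent finProdFinEquiv fun _ => binQF R 0 0).symm.trans
    (pi_equivalent_pi_curry _)

theorem pi_prod_hyps_equivalent {n m h : ℕ} (P : Fin n → QuadraticForm R M)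
    (B : Fin n → Fin m → QuadraticForm R N)
    (hB : ∀ k, ((P k).prod (hyps R h)).Equivalent (pi (B k))) :
    ((pi P).prod (hyps R (n * h))).Equivalent
      (pi fun j => B (finProdFinEquiv.symm j).1 (finProdFinEquiv.symm j).2) :=
  (((Equivalent.refl _).prod (hyps_mul_equivalent n h)).trans
    (pi_prod_equivalent_prod_pi P _).symm).trans
    ((Equivalent.pi hB).trans ((pi_equivalent_pi_curry fun p => B p.1 p.2).symm.trans
      (pi_comp_equivalent finProdFinEquiv.symm _).symm))

variable [CharP R 2]

theorem binQF_one_equivalent_sq (c : R) : (binQF R 1 c).Equivalent (binQF R 1 (c ^ 2)) :=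
  ⟨{ toFun := fun z => (z.1 + c * z.2, z.2)
     invFun := fun z => (z.1 - c * z.2, z.2)
     map_add' := fun a b => by ext <;> simp; ring
     map_smul' := fun a z => by ext <;> simp; ring
     left_inv := fun z => by ext <;> simp
     right_inv := fun z => by ext <;> simp
     map_app' := fun z => by
       simp only [binQF_apply]
       linear_combination (c * z.1 * z.2 + c ^ 2 * z.2 * z.2) * CharTwo.two_eq_zero (R := R) }⟩

theorem hyperbolic_prod_self_equivalent (d : R) :
    ((binQF R 0 0).prod (binQF R 0 0)).Equivalent ((binQF R 1 d).prod (binQF R 1 d)) :=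
  ⟨{ toFun := fun z => ((z.1.1 + d * z.1.2, z.1.2 + z.2.1 + z.2.2),
        (z.1.1 + d * z.1.2 + z.2.2, z.2.1 + z.2.2))
     invFun := fun z => ((z.1.1 - d * z.1.2 + d * z.2.2, z.1.2 - z.2.2),
        (z.1.1 - z.2.1 + z.2.2, z.2.1 - z.1.1))
     map_add' := fun a b => by ext <;> simp only [Prod.fst_add, Prod.snd_add] <;> ring
     map_smul' := fun a z => by
       ext <;> simp only [Prod.smul_fst, Prod.smul_snd, smul_eq_mul, RingHom.id_apply] <;> ring
     left_inv := fun z => by ext <;> dsimp only <;> ring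
     right_inv := fun z => by ext <;> dsimp only <;> ring
     map_app' := fun ⟨⟨x₁, y₁⟩, x₂, y₂⟩ => by
       simp only [prod_apply, binQF_apply]
       linear_combination (x₁ ^ 2 + 2 * d * x₁ * y₁ + d ^ 2 * y₁ ^ 2 + x₁ * x₂ + 2 * x₁ * y₂
         + d * y₁ ^ 2 + 2 * d * y₁ * x₂ + 3 * d * y₁ * y₂ + d * x₂ ^ 2 + 2 * d * x₂ * y₂
         + d * y₂ ^ 2 + y₂ ^ 2) * CharTwo.two_eq_zero (R := R) }⟩

theorem smul_pf2_prod_hyps_equivalent (l u c : R) :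
    ((l • pf2 R u c).prod (hyps R 2)).Equivalent
      (pi fun i => pfTensor (![l, l * u] i) (binQF R 1 (c ^ 2))) := by
  have hψ := binQF_one_equivalent_sq c
  rw [smul_pf2]
  refine (((hψ.smul l).prod (hψ.smul (l * u))).prod
    ((pi_finTwo_equivalent _).trans (hyperbolic_prod_self_equivalent (c ^ 2)))).trans ?_
  refine Equivalent.trans ⟨IsometryEquiv.prodComm _ _⟩ ?_
  exact Equivalent.trans ⟨IsometryEquiv.prodProdProdComm _ _ _ _⟩
    (pi_finTwo_equivalent fun i => pfTensor (![l, l * u] i) (binQF R 1 (c ^ 2))).symm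

theorem pi_smul_pf2_prod_hyps_equivalent {n : ℕ} (l u c : Fin n → R) :
    ((pi fun k => l k • pf2 R (u k) (c k)).prod (hyps R (n * 2))).Equivalent
      (pi fun j => pfTensor
        (![l (finProdFinEquiv.symm j).1,
            l (finProdFinEquiv.symm j).1 * u (finProdFinEquiv.symm j).1] (finProdFinEquiv.symm j).2)
        (binQF R 1 (c (finProdFinEquiv.symm j).1 ^ 2))) :=
  pi_prod_hyps_equivalent _ _ fun k => smul_pf2_prod_hyps_equivalent (l k) (u k) (c k)

end

theorem stmt_17_general (F K : Type u) [Field F] [Field K] [Algebra F K] [CharP F 2]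
    (hins : ∀ z : K, z ^ 2 ∈ (algebraMap F K).range)
    (n : ℕ) (lam uu : Fin n → K) (hlam : ∀ k, lam k ≠ 0) (hu : ∀ k, uu k ≠ 0)
    (c : Fin n → K) :
    ∃ (m : ℕ) (w : Fin m → K) (N : Fin m → ℕ)
      (aa bb : (j : Fin m) → Fin (N j) → F),
      (∀ j, w j ≠ 0) ∧
      WittEq K (QuadraticMap.pi fun k : Fin n => lam k • pf2 K (uu k) (c k))
        (QuadraticMap.pi fun j : Fin m =>
          (QuadraticMap.pi fun p : Fin (N j) =>
            binQF K (algebraMap F K (aa j p)) (algebraMap F K (bb j p))).prod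
          (w j • QuadraticMap.pi fun p : Fin (N j) =>
            binQF K (algebraMap F K (aa j p)) (algebraMap F K (bb j p)))) := by
  have : CharP K 2 := charP_of_injective_algebraMap (algebraMap F K).injective 2
  choose b hb using fun k => hins (c k)
  have hw (k : Fin n) : ∀ i, ![lam k, lam k * uu k] i ≠ 0 :=
    Fin.forall_fin_two.2 ⟨hlam k, mul_ne_zero (hlam k) (hu k)⟩
  refine ⟨n * 2, fun j => ![lam (finProdFinEquiv.symm j).1,
      lam (finProdFinEquiv.symm j).1 * uu (finProdFinEquiv.symm j).1] (finProdFinEquiv.symm j).2,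
    fun _ => 1, fun _ _ => 1, fun j _ => b (finProdFinEquiv.symm j).1,
    fun j => hw _ _, n * 2, 0, ?_⟩
  refine (pi_smul_pf2_prod_hyps_equivalent lam uu c).trans
    ((Equivalent.pi fun j => ?_).trans (equivalent_prod_of_unique _ _))
  simp only [map_one, hb]
  exact pfTensor_congr _ (equivalent_pi_unique _)

/-- For a purely inseparable quadratic extension `K/F` in characteristic 2,
`I²_q K = IK ⊗ I_q F`: every class of `I²_q K` (represented by a sum of scaled quadratic
2-fold Pfister forms `⊥ᵢ λᵢ⟨⟨uᵢ, cᵢ]]`) is Witt equivalent to a sum of forms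
`⟨1, wⱼ⟩_b ⊗ ψⱼ = ψⱼ ⊥ wⱼ·ψⱼ` with `wⱼ ∈ K^×` and `ψⱼ` a nonsingular quadratic form
defined over `F` (i.e. a sum of binary forms `[aᵢ, bᵢ]` with coefficients in `F`). -/
theorem stmt_17 (F K : Type u) [Field F] [Field K] [Algebra F K] [CharP F 2]
    (hins : ∀ z : K, z ^ 2 ∈ (algebraMap F K).range) (hdeg : Module.finrank F K = 2)
    (n : ℕ) (lam uu : Fin n → K) (hlam : ∀ k, lam k ≠ 0) (hu : ∀ k, uu k ≠ 0)
    (c : Fin n → K) :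
    ∃ (m : ℕ) (w : Fin m → K) (N : Fin m → ℕ)
      (aa bb : (j : Fin m) → Fin (N j) → F),
      (∀ j, w j ≠ 0) ∧
      WittEq K (QuadraticMap.pi fun k : Fin n => lam k • pf2 K (uu k) (c k))
        (QuadraticMap.pi fun j : Fin m =>
          (QuadraticMap.pi fun p : Fin (N j) =>
            binQF K (algebraMap F K (aa j p)) (algebraMap F K (bb j p))).prod
          (w j • QuadraticMap.pi fun p : Fin (N j) =>
            binQF K (algebraMap F K (aa j p)) (algebraMap F K (bb j p)))) :=
  stmt_17_general F K hins n lam uu hlam hu c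
end

section
/- Let F be a field of characteristic 2, K = F(√b) with b ∈ F^× a nonsquare, and s : K → F the F-linear functional with s(1) = 0 and s(√b) = 1. For z = x ∈ F^× ⊆ K^× (i.e., z with zero √b-component), the transfer s_*(⟨z⟩_b) of the 1-dimensional bilinear form ⟨z⟩_b over K is a metabolic (hence Witt-trivial) symmetric bilinear form over F. -/
open scoped TensorProduct

universe u

/-! The line `F ∙ 1` is a Lagrangian: `s` vanishes on it and it is closed under products, so it
is totally isotropic, and since `x ≠ 0` its orthogonal is `ker s`, which the coordinates
`w = u + v β` identify with `F ∙ 1`. -/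

theorem ker_eq_span_one {F K : Type u} [Field F] [Ring K] [Algebra F K] {β : K}
    (hspan : ∀ w : K, ∃ u v : F, w = algebraMap F K u + algebraMap F K v * β)
    {s : K →ₗ[F] F} (hs1 : s 1 = 0) (hsβ : s β = 1) :
    LinearMap.ker s = F ∙ (1 : K) := by
  ext w
  obtain ⟨a, c, rfl⟩ := hspan w
  have hsw : s (algebraMap F K a + algebraMap F K c * β) = c := by
    rw [map_add, ← Algebra.smul_def, Algebra.algebraMap_eq_smul_one, map_smul, map_smul,
      hs1, hsβ, smul_zero, smul_eq_mul, mul_one, zero_add]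
  rw [LinearMap.mem_ker, hsw, Submodule.mem_span_singleton]
  constructor
  · rintro rfl
    exact ⟨a, by rw [map_zero, zero_mul, add_zero, Algebra.algebraMap_eq_smul_one]⟩
  · rintro ⟨d, hd⟩
    rw [← hsw, ← hd, map_smul, hs1, smul_zero]

theorem stmt_19_general (F K : Type u) [Field F] [Field K] [Algebra F K]
    (β : K)
    (hspan : ∀ w : K, ∃ u v : F, w = algebraMap F K u + algebraMap F K v * β)
    (s : K →ₗ[F] F) (hs1 : s 1 = 0) (hsβ : s β = 1)
    (x : F) (hx : x ≠ 0) :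
    ∃ N : Submodule F K,
      (∀ u ∈ N, ∀ v ∈ N, s (algebraMap F K x * u * v) = 0) ∧
      (∀ v : K, (∀ u ∈ N, s (algebraMap F K x * u * v) = 0) → v ∈ N) := by
  have hker := ker_eq_span_one hspan hs1 hsβ
  refine ⟨F ∙ 1, fun u hu v hv => ?_, fun v hv => ?_⟩
  · rw [← Submodule.one_eq_span] at hu hv
    have huv : u * v ∈ F ∙ (1 : K) := by
      rw [← Submodule.one_eq_span, ← one_mul (1 : Submodule F K)]
      exact Submodule.mul_mem_mul hu hv
    rw [← LinearMap.mem_ker, hker, mul_assoc, ← Algebra.smul_def]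
    exact Submodule.smul_mem _ x huv
  · have hxv := hv 1 (Submodule.mem_span_singleton_self 1)
    rw [mul_one, ← Algebra.smul_def, map_smul, smul_eq_mul] at hxv
    rw [← hker, LinearMap.mem_ker]
    exact (mul_eq_zero.mp hxv).resolve_left hx

/-- For `K = F(√b)`, `s(1) = 0`, `s(√b) = 1` and `z = x ∈ F^×`, the
transfer `s_*(⟨z⟩_b)`, i.e. the `F`-bilinear form `(u,v) ↦ s(zuv)` on `K`, is metabolic:
it admits a Lagrangian, a submodule `N` equal to its own orthogonal complement. -/
theorem stmt_19 (F K : Type u) [Field F] [Field K] [Algebra F K] [CharP F 2]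
    (b : F) (hbns : ∀ u : F, u ^ 2 ≠ b) (β : K) (hβ : β ^ 2 = algebraMap F K b)
    (hspan : ∀ w : K, ∃ u v : F, w = algebraMap F K u + algebraMap F K v * β)
    (s : K →ₗ[F] F) (hs1 : s 1 = 0) (hsβ : s β = 1)
    (x : F) (hx : x ≠ 0) :
    ∃ N : Submodule F K,
      (∀ u ∈ N, ∀ v ∈ N, s (algebraMap F K x * u * v) = 0) ∧
      (∀ v : K, (∀ u ∈ N, s (algebraMap F K x * u * v) = 0) → v ∈ N) :=
  stmt_19_general F K β hspan s hs1 hsβ x hx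
end
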